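/- arXiv:1401.0500 — 2 statements merged into one kernel-verified Lean document; each statement's English description precedes it below -/
import Mathlib

section
/- Let M be a finite matroid that is representable over some field, and let X_1, X_2, X_3, X_4 be any subsets of the ground set E(M). Then M satisfies the Ingleton inequality: r(X_3) + r(X_4) + r(X_1∪X_2) + r(X_1∪X_3∪X_4) + r(X_2∪X_3∪X_4) ≤ r(X_1∪X_3) + r(X_1∪X_4) + r(X_2∪X_3) + r(X_2∪X_4) + r(X_3∪X_4). -/
open Finset

universe u v

namespace Matroid

variable {α : Type*}

/-- The rank of a set in a matroid: the cardinality of a largest independent subset. -/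
noncomputable def rnk (M : Matroid α) (X : Set α) : ℕ :=
  sSup {n : ℕ | ∃ I, M.Indep I ∧ I ⊆ X ∧ I.ncard = n}

/-- The `n`-th Kinser inequality for the family `X 1, …, X n`. -/
def KinserIneq (M : Matroid α) (n : ℕ) (X : ℕ → Set α) : Prop :=
  (∑ i ∈ Finset.Icc 3 n, M.rnk (X i)) + M.rnk (X 1 ∪ X 2) + M.rnk (X 1 ∪ X 3 ∪ X n)
      + ∑ i ∈ Finset.Icc 4 n, M.rnk (X 2 ∪ X (i - 1) ∪ X i)
    ≤ M.rnk (X 1 ∪ X 3) + M.rnk (X 1 ∪ X n)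
      + (∑ i ∈ Finset.Icc 3 n, M.rnk (X 2 ∪ X i))
      + ∑ i ∈ Finset.Icc 4 n, M.rnk (X (i - 1) ∪ X i)

/-- `M` lies in the Kinser class `K n`: the `n`-th Kinser inequality holds for every
family of `n` subsets of the ground set. -/
def MemKinserClass (M : Matroid α) (n : ℕ) : Prop :=
  ∀ X : ℕ → Set α, (∀ i ∈ Finset.Icc 1 n, X i ⊆ M.E) → M.KinserIneq n X

/-- `M` is (isomorphic to) the matroid of linear dependence of a family of vectors of a
vector space over `𝔽`. -/
def IsRepOver {α : Type u} (M : Matroid α) (𝔽 : Type v) [Field 𝔽] : Prop :=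
  ∃ (W : Type (max u v)) (_ : AddCommGroup W) (_ : Module 𝔽 W) (φ : α → W),
    ∀ I : Set α, M.Indep I ↔ I ⊆ M.E ∧ LinearIndependent 𝔽 (fun x : I => φ x.1)

/-- Deletion of a set of elements from a matroid. -/
def del (M : Matroid α) (D : Set α) : Matroid α := M ↾ (M.E \ D)

/-- Contraction of a set of elements in a matroid. -/
def con (M : Matroid α) (C : Set α) : Matroid α := (M✶ ↾ (M✶.E \ C))✶

/-- `N` is a minor of `M`: it is obtained from `M` by contractions and deletions. -/
def IsMinorOf (N M : Matroid α) : Prop :=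
  ∃ C D : Set α, C ⊆ M.E ∧ D ⊆ M.E ∧ Disjoint C D ∧ N = (M.con C).del D

/-- `N` is a proper minor of `M`: at least one element is deleted or contracted. -/
def IsProperMinorOf (N M : Matroid α) : Prop :=
  ∃ C D : Set α, C ⊆ M.E ∧ D ⊆ M.E ∧ Disjoint C D ∧ (C ∪ D).Nonempty ∧
    N = (M.con C).del D

/-- A matroid isomorphism: a bijection of ground sets preserving independence. -/
def IsIsoTo {β : Type*} (M : Matroid α) (N : Matroid β) : Prop :=
  ∃ f : α → β, Set.BijOn f M.E N.E ∧ ∀ I ⊆ M.E, (M.Indep I ↔ N.Indep (f '' I))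

/-- The Ingleton inequality (the 4th Kinser inequality) for four subsets. -/
def IngletonIneq (M : Matroid α) (X₁ X₂ X₃ X₄ : Set α) : Prop :=
  M.rnk X₃ + M.rnk X₄ + M.rnk (X₁ ∪ X₂) + M.rnk (X₁ ∪ X₃ ∪ X₄) + M.rnk (X₂ ∪ X₃ ∪ X₄)
    ≤ M.rnk (X₁ ∪ X₃) + M.rnk (X₁ ∪ X₄) + M.rnk (X₂ ∪ X₃) + M.rnk (X₂ ∪ X₄)
      + M.rnk (X₃ ∪ X₄)

end Matroid

/-!
For vectors `φ e` representing `M`, the rank of `X` is the dimension of the span of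
`φ '' (X ∩ E)`, and spans turn unions into sums of subspaces, so it suffices to prove the
inequality for finite-dimensional subspaces `A, B, C, D`. Put `P = (A + C) ∩ (A + D)` and
`Q = (B + C) ∩ (B + D)`. Modularity of dimension gives
`dim (A + C) + dim (A + D) = dim (A + C + D) + dim P`, likewise for `B`, and since
`A + B ≤ P + Q` and `C ∩ D ≤ P ∩ Q`,
`dim P + dim Q ≥ dim (A + B) + dim (C ∩ D) = dim (A + B) + dim C + dim D - dim (C + D)`.
-/

open Module Submodule

theorem Submodule.finrank_ingleton_le {K V : Type*} [Field K] [AddCommGroup V] [Module K V]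
    (A B C D : Submodule K V) [FiniteDimensional K A] [FiniteDimensional K B]
    [FiniteDimensional K C] [FiniteDimensional K D] :
    finrank K C + finrank K D + finrank K ↥(A ⊔ B) + finrank K ↥(A ⊔ C ⊔ D)
        + finrank K ↥(B ⊔ C ⊔ D)
      ≤ finrank K ↥(A ⊔ C) + finrank K ↥(A ⊔ D) + finrank K ↥(B ⊔ C) + finrank K ↥(B ⊔ D)
        + finrank K ↥(C ⊔ D) := by
  have hsup (E : Submodule K V) : (E ⊔ C) ⊔ (E ⊔ D) = E ⊔ C ⊔ D := by
    rw [sup_sup_sup_comm, sup_idem, ← sup_assoc]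
  have hP := finrank_sup_add_finrank_inf_eq (A ⊔ C) (A ⊔ D)
  have hQ := finrank_sup_add_finrank_inf_eq (B ⊔ C) (B ⊔ D)
  rw [hsup] at hP hQ
  set P := (A ⊔ C) ⊓ (A ⊔ D)
  set Q := (B ⊔ C) ⊓ (B ⊔ D)
  have hPQ := finrank_sup_add_finrank_inf_eq P Q
  have hCD := finrank_sup_add_finrank_inf_eq C D
  have hAB_le : finrank K ↥(A ⊔ B) ≤ finrank K ↥(P ⊔ Q) :=
    finrank_mono (sup_le_sup (le_inf le_sup_left le_sup_left) (le_inf le_sup_left le_sup_left))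
  have hC {E : Submodule K V} : C ⊓ D ≤ E ⊔ C := inf_le_left.trans le_sup_right
  have hD {E : Submodule K V} : C ⊓ D ≤ E ⊔ D := inf_le_right.trans le_sup_right
  have hCD_le : finrank K ↥(C ⊓ D) ≤ finrank K ↥(P ⊓ Q) :=
    finrank_mono (le_inf (le_inf hC hD) (le_inf hC hD))
  omega

theorem LinearIndepOn.finrank_span_image_eq_ncard {K V ι : Type*} [Field K] [AddCommGroup V]
    [Module K V] {v : ι → V} {s : Set ι} (hs : LinearIndepOn K v s) :
    finrank K (span K (v '' s)) = s.ncard :=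
  congrArg ENat.toNat (toENat_rank_span_set hs)

namespace Matroid

variable {α : Type*} {M : Matroid α} {I X : Set α}

theorem rnk_eq_ncard_of_isBasis' (hI : M.IsBasis' I X) (hIfin : I.Finite) :
    M.rnk X = I.ncard := by
  refine IsGreatest.csSup_eq ⟨⟨I, hI.indep, hI.subset, rfl⟩, ?_⟩
  rintro _ ⟨J, hJ, hJX, rfl⟩
  have := (hJ.encard_le_eRk_of_subset hJX).trans_eq hI.encard_eq_eRk.symm
  exact ENat.toNat_le_toNat this hIfin.encard_lt_top.ne

variable {K W : Type*} [Field K] [AddCommGroup W] [Module K W] {φ : α → W}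

theorem span_image_inter_ground_eq_of_isBasis'
    (hφ : ∀ I, M.Indep I ↔ I ⊆ M.E ∧ LinearIndepOn K φ I) (hI : M.IsBasis' I X) :
    span K (φ '' (X ∩ M.E)) = span K (φ '' I) := by
  refine le_antisymm (span_le.2 ?_) (span_mono (Set.image_mono ?_))
  · rintro _ ⟨e, ⟨heX, heE⟩, rfl⟩
    by_contra he
    have heI : e ∉ I := fun heI ↦ he (subset_span (Set.mem_image_of_mem φ heI))
    refine hI.insert_not_indep ⟨heX, heI⟩
      ((hφ _).2 ⟨Set.insert_subset heE hI.indep.subset_ground, ?_⟩)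
    exact linearIndepOn_insert_iff.2 ⟨((hφ I).1 hI.indep).2, fun h ↦ absurd h he⟩
  · exact Set.subset_inter hI.subset hI.indep.subset_ground

theorem rnk_eq_finrank_span [M.RankFinite]
    (hφ : ∀ I, M.Indep I ↔ I ⊆ M.E ∧ LinearIndepOn K φ I) (X : Set α) :
    M.rnk X = finrank K (span K (φ '' (X ∩ M.E))) := by
  obtain ⟨I, hI⟩ := M.exists_isBasis' X
  rw [rnk_eq_ncard_of_isBasis' hI hI.indep.finite, span_image_inter_ground_eq_of_isBasis' hφ hI,
    ((hφ I).1 hI.indep).2.finrank_span_image_eq_ncard]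

theorem ingletonIneq_of_rnk_eq_finrank (V : Set α → Submodule K W)
    [∀ X, FiniteDimensional K (V X)] (hV : ∀ X Y, V (X ∪ Y) = V X ⊔ V Y)
    (hrnk : ∀ X, M.rnk X = finrank K (V X)) (X₁ X₂ X₃ X₄ : Set α) :
    M.IngletonIneq X₁ X₂ X₃ X₄ := by
  simp only [IngletonIneq, hrnk]
  repeat rw [hV]
  exact Submodule.finrank_ingleton_le _ _ _ _

end Matroid

theorem Matroid.isRepOver_ingletonIneq_general {α : Type u} (M : Matroid α) [M.Finite]
    (hrep : ∃ (𝔽 : Type v) (_ : Field 𝔽), M.IsRepOver 𝔽)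
    (X₁ X₂ X₃ X₄ : Set α) :
    M.IngletonIneq X₁ X₂ X₃ X₄ := by
  obtain ⟨𝔽, _, W, _, _, φ, hφ⟩ := hrep
  have (X : Set α) : FiniteDimensional 𝔽 (span 𝔽 (φ '' (X ∩ M.E))) :=
    FiniteDimensional.span_of_finite 𝔽 ((M.ground_finite.subset Set.inter_subset_right).image φ)
  refine ingletonIneq_of_rnk_eq_finrank (fun X ↦ span 𝔽 (φ '' (X ∩ M.E))) (fun X Y ↦ ?_)
    (rnk_eq_finrank_span hφ) X₁ X₂ X₃ X₄
  simp only [Set.union_inter_distrib_right, Set.image_union, span_union]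

/-- A finite matroid representable over some field satisfies the Ingleton inequality. -/
theorem Matroid.isRepOver_ingletonIneq {α : Type u} (M : Matroid α) [M.Finite]
    (hrep : ∃ (𝔽 : Type v) (_ : Field 𝔽), M.IsRepOver 𝔽)
    (X₁ X₂ X₃ X₄ : Set α) (h₁ : X₁ ⊆ M.E) (h₂ : X₂ ⊆ M.E) (h₃ : X₃ ⊆ M.E) (h₄ : X₄ ⊆ M.E) :
    M.IngletonIneq X₁ X₂ X₃ X₄ :=
  Matroid.isRepOver_ingletonIneq_general M hrep X₁ X₂ X₃ X₄
end

section
/- Let n ≥ 4 be an integer and let M = (E, r) and M' = (E', r') be finite matroids on disjoint ground sets, each satisfying the n-th Kinser inequality for every family of n subsets of its ground set. Then the direct sum M ⊕ M' satisfies the n-th Kinser inequality for every family of n subsets of E ∪ E'. In other words, the Kinser class K_n is closed under direct sums. -/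
/-!
The rank function of `M ⊕ M'` is `X ↦ r(X ∩ E) + r'(X ∩ E')`, and the Kinser inequality is a
linear inequality between values of the rank function on unions of the `Xᵢ`. Since intersecting
with `E` commutes with unions, the inequality for `M ⊕ M'` and the family `(Xᵢ)` is the sum of
the inequalities for `M` and `(Xᵢ ∩ E)` and for `M'` and `(Xᵢ ∩ E')`.
-/

open Finset

universe u v

namespace Matroid

variable {α : Type*} {M N : Matroid α}

-- Both sides are `0` when `X` has infinite rank.
lemma rnk_eq_toNat_eRk (M : Matroid α) (X : Set α) : M.rnk X = (M.eRk X).toNat := by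
  by_cases hX : M.IsRkFinite X
  · obtain ⟨I, hI, hIfin⟩ := hX.exists_finite_isBasis'
    have hmax : IsGreatest {n : ℕ | ∃ J, M.Indep J ∧ J ⊆ X ∧ J.ncard = n} I.ncard := by
      refine ⟨⟨I, hI.indep, hI.subset, rfl⟩, ?_⟩
      rintro _ ⟨J, hJ, hJX, rfl⟩
      have hJfin : J.Finite := hX.finite_of_indep_subset hJ hJX
      have hle : J.encard ≤ I.encard := hI.encard_eq_eRk ▸ hJ.encard_le_eRk_of_subset hJX
      rwa [← hJfin.cast_ncard_eq, ← hIfin.cast_ncard_eq, Nat.cast_le] at hle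
    rw [rnk, hmax.csSup_eq, hI.eRk_eq_encard, ← hIfin.cast_ncard_eq, ENat.toNat_natCast]
  · have hunbdd : ¬ BddAbove {n : ℕ | ∃ J, M.Indep J ∧ J ⊆ X ∧ J.ncard = n} := by
      rintro ⟨b, hb⟩
      have hbig : ((b + 1 : ℕ) : ℕ∞) ≤ M.eRk X := by simp [eRk_eq_top_iff.2 hX]
      obtain ⟨J, hJX, hJ, hJcard⟩ := le_eRk_iff.1 hbig
      have hJfin : J.Finite := Set.finite_of_encard_eq_coe hJcard
      have := hb ⟨J, hJ, hJX, rfl⟩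
      rw [← hJfin.cast_ncard_eq, Nat.cast_inj] at hJcard
      omega
    rw [rnk, Nat.sSup_of_not_bddAbove hunbdd, eRk_eq_top_iff.2 hX, ENat.toNat_top]

lemma eRk_disjointSum (h : Disjoint M.E N.E) (X : Set α) :
    (M.disjointSum N h).eRk X = M.eRk (X ∩ M.E) + N.eRk (X ∩ N.E) := by
  obtain ⟨I, hI⟩ := (M.disjointSum N h).exists_isBasis' X
  obtain ⟨hIM, hIN, -⟩ := disjointSum_isBasis_iff.1 hI.isBasis_inter_ground
  have hIE : I ⊆ M.E ∪ N.E := by simpa using hI.indep.subset_ground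
  simp only [disjointSum_ground_eq, Set.inter_assoc, Set.union_inter_cancel_left,
    Set.union_inter_cancel_right] at hIM hIN
  rw [hI.eRk_eq_encard, hIM.eRk_eq_encard, hIN.eRk_eq_encard,
    ← Set.encard_union_eq (h.mono Set.inter_subset_right Set.inter_subset_right),
    ← Set.inter_union_distrib_left, Set.inter_eq_left.2 hIE]

lemma rnk_disjointSum [M.RankFinite] [N.RankFinite] (h : Disjoint M.E N.E) (X : Set α) :
    (M.disjointSum N h).rnk X = M.rnk (X ∩ M.E) + N.rnk (X ∩ N.E) := by
  simp only [rnk_eq_toNat_eRk, eRk_disjointSum]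
  exact ENat.toNat_add (M.isRkFinite_set _).eRk_lt_top.ne (N.isRkFinite_set _).eRk_lt_top.ne

lemma KinserIneq.disjointSum [M.RankFinite] [N.RankFinite] (h : Disjoint M.E N.E) {n : ℕ}
    {X : ℕ → Set α} (hM : M.KinserIneq n fun i ↦ X i ∩ M.E)
    (hN : N.KinserIneq n fun i ↦ X i ∩ N.E) : (M.disjointSum N h).KinserIneq n X := by
  simp only [KinserIneq] at hM hN ⊢
  simp only [rnk_disjointSum, Set.union_inter_distrib_right, Finset.sum_add_distrib]
  omega

end Matroid

theorem Matroid.disjointSum_memKinserClass_general {α : Type*} {n : ℕ}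
    (M M' : Matroid α) [M.Finite] [M'.Finite] (hdisj : Disjoint M.E M'.E)
    (hM : M.MemKinserClass n) (hM' : M'.MemKinserClass n) :
    (M.disjointSum M' hdisj).MemKinserClass n :=
  fun _ _ ↦ .disjointSum hdisj (hM _ fun _ _ ↦ Set.inter_subset_right)
    (hM' _ fun _ _ ↦ Set.inter_subset_right)

/-- The Kinser class `K n` is closed under direct sums. -/
theorem Matroid.disjointSum_memKinserClass {α : Type*} {n : ℕ} (hn : 4 ≤ n)
    (M M' : Matroid α) [M.Finite] [M'.Finite] (hdisj : Disjoint M.E M'.E)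
    (hM : M.MemKinserClass n) (hM' : M'.MemKinserClass n) :
    (M.disjointSum M' hdisj).MemKinserClass n :=
  Matroid.disjointSum_memKinserClass_general M M' hdisj hM hM'
end
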